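/- arXiv:2406.02669 — 3 statements merged into one kernel-verified Lean document; each statement's English description precedes it below -/
import Mathlib

section
/- Dual-space form of a uniform stochastic instrument composed with a unitary (Lemma 1 of the paper): let n, m ∈ ℕ, let p : Z2^n × Z2^n × V_m → ℝ, and let λ be its Pauli-fidelity transform λ(x,y,Q) := Σ_{a,b,P} (-1)^{a·x + b·y + ⟨P,Q⟩} p(a,b,P). Let G be a unitary matrix on the (m+n)-qubit space. Then for every k ∈ Z2^n and every complex matrix ρ on the (m+n)-qubit space: Σ_{a,b ∈ Z2^n, P ∈ V_m} p(a,b,P) · (W(P) ⊗ E_{k+b,k+a}) (G ρ G†) (W(P) ⊗ E_{k+b,k+a})† = 2^{-(2n+m)} · Σ_{x,y ∈ Z2^n, Q ∈ V_m} (-1)^{k·(x+y)} λ(x,y,Q) · Tr(G† (W(Q) ⊗ Z^x) G · ρ) · (W(Q) ⊗ Z^y). -/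
open Finset Matrix Kronecker

/-- `m`-qubit Pauli operators modulo phase, as pairs of X- and Z-exponents per qubit. -/
abbrev V (m : ℕ) := Fin m → ZMod 2 × ZMod 2

/-- Symplectic inner product recording (non-)commutation of Pauli operators. -/
def sympl {m : ℕ} (P Q : V m) : ZMod 2 :=
  ∑ i, ((P i).1 * (Q i).2 + (P i).2 * (Q i).1)

/-- Dot product on `Z2^n`. -/
def dot {n : ℕ} (x y : Fin n → ZMod 2) : ZMod 2 := ∑ i, x i * y i

/-- The real sign `(-1)^z` associated with `z : ZMod 2`. -/
def sgn (z : ZMod 2) : ℝ := (-1 : ℝ) ^ z.val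

/-- The Hermitian Pauli matrix labeled by `v : V n`, with entries
`W(v)_{j,k} = i^{s(v)} (-1)^{Σ_i (v i).2 k_i} [j = k + a(v)]`. -/
noncomputable def W {n : ℕ} (v : V n) :
    Matrix (Fin n → ZMod 2) (Fin n → ZMod 2) ℂ := fun j k =>
  Complex.I ^ (Finset.univ.filter (fun i => (v i).1 = 1 ∧ (v i).2 = 1)).card *
    (-1 : ℂ) ^ (∑ i, (v i).2 * k i : ZMod 2).val *
    (if j = (fun i => k i + (v i).1) then 1 else 0)

/-- `Z^x`: the purely-Z Pauli matrix with Z-exponents `x`. -/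
noncomputable def Zpow {n : ℕ} (x : Fin n → ZMod 2) :
    Matrix (Fin n → ZMod 2) (Fin n → ZMod 2) ℂ :=
  W (fun i => ((0 : ZMod 2), x i))

/-- Matrices on the `(m+n)`-qubit space, indexed as a product of the
`m`-qubit and `n`-qubit computational-basis index sets. -/
abbrev MatP (m n : ℕ) :=
  Matrix ((Fin m → ZMod 2) × (Fin n → ZMod 2)) ((Fin m → ZMod 2) × (Fin n → ZMod 2)) ℂ

/-!
After substituting the definition of `λ` and exchanging the sums, the claim splits into one
identity for each fixed `(a, b, P)`: with `c = k + a`, `d = k + b` and `σ = G ρ Gᴴ`,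
`∑_{x,y,Q} (-1)^(c·x + d·y + ⟨P,Q⟩) Tr((W Q ⊗ Z^x) σ) (W Q ⊗ Z^y)
  = 2^(2n+m) (W P ⊗ E_{d,c}) σ (W P ⊗ E_{d,c})ᴴ`,
using `Tr(Gᴴ X G ρ) = Tr(X σ)`. Both sides are additive in `σ`, so it suffices to take
`σ = A ⊗ B`, where the left side factors. On the `n`-qubit factor the character sum
`∑_x (-1)^(x·c) = 2^n [c = 0]` gives `∑_x (-1)^(c·x) Tr(Z^x B) = 2^n B_{cc}` and
`∑_y (-1)^(d·y) Z^y = 2^n E_{dd}`; on the `m`-qubit factor it gives the twisted completeness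
relation `∑_Q (-1)^⟨P,Q⟩ Tr(W Q A) W Q = 2^m W P A (W P)ᴴ`.
-/

noncomputable def chi (z : ZMod 2) : ℂ := (-1) ^ z.val

lemma chi_add (a b : ZMod 2) : chi (a + b) = chi a * chi b := by
  rw [chi, chi, chi, ZMod.val_add, ← neg_one_pow_eq_pow_mod_two, pow_add]

lemma chi_natCast (c : ℕ) : chi c = (-1) ^ c := by
  rw [chi, ZMod.val_natCast, ← neg_one_pow_eq_pow_mod_two]

@[simp] lemma star_chi (z : ZMod 2) : star (chi z) = chi z := by simp [chi]

lemma ofReal_sgn (z : ZMod 2) : ((sgn z : ℝ) : ℂ) = chi z := by simp [sgn, chi]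

section Dot
variable {n : ℕ}

lemma dot_eq_dotProduct (x y : Fin n → ZMod 2) : dot x y = x ⬝ᵥ y := rfl

lemma dot_comm (x y : Fin n → ZMod 2) : dot x y = dot y x := dotProduct_comm x y

lemma dot_add_right (x y z : Fin n → ZMod 2) : dot x (y + z) = dot x y + dot x z :=
  dotProduct_add x y z

lemma dot_add_left (x y z : Fin n → ZMod 2) : dot (x + y) z = dot x z + dot y z :=
  add_dotProduct x y z

lemma sum_chi_dot (c : Fin n → ZMod 2) :
    ∑ x, chi (dot x c) = if c = 0 then 2 ^ n else 0 := by
  split_ifs with hc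
  · simp [hc, dot, chi]
  obtain ⟨i, hi⟩ := Function.ne_iff.mp hc
  have hflip : chi (dot (Pi.single i 1 : Fin n → ZMod 2) c) = -1 := by
    have : ∀ z : ZMod 2, z ≠ 0 → z = 1 := by decide
    simp [dot_eq_dotProduct, this _ hi, chi, ZMod.val_one]
  set S := ∑ x, chi (dot x c)
  have hS : S = -S := calc
    S = ∑ x, chi (dot (x + (Pi.single i 1 : Fin n → ZMod 2)) c) :=
      (Equiv.sum_comp (Equiv.addRight _) _).symm
    _ = -S := by simp only [dot_add_left, chi_add, hflip, mul_neg_one, sum_neg_distrib, S]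
  exact CharZero.eq_neg_self_iff.mp hS

end Dot

section ZPart
variable {n : ℕ}

lemma sum_chi_dot_mul_chi_dot (c v : Fin n → ZMod 2) :
    ∑ x, chi (dot c x) * chi (dot x v) = if v = c then 2 ^ n else 0 := by
  simp_rw [← chi_add, dot_comm c, ← dot_add_right, sum_chi_dot, add_eq_zero_iff_eq_neg',
    ZModModule.neg_eq_self]

lemma Zpow_eq_diagonal (x : Fin n → ZMod 2) : Zpow x = diagonal fun v => chi (dot x v) := by
  ext j k
  by_cases h : j = k <;> simp [Zpow, W, chi, dot, h]

lemma sum_chi_mul_trace_Zpow_mul (c : Fin n → ZMod 2)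
    (B : Matrix (Fin n → ZMod 2) (Fin n → ZMod 2) ℂ) :
    ∑ x, chi (dot c x) * (Zpow x * B).trace = 2 ^ n * B c c := by
  simp_rw [Zpow_eq_diagonal, trace, diag_apply, diagonal_mul, mul_sum]
  rw [sum_comm]
  simp_rw [← mul_assoc, ← sum_mul, sum_chi_dot_mul_chi_dot]
  simp

lemma sum_chi_smul_Zpow (d : Fin n → ZMod 2) :
    ∑ y, chi (dot d y) • Zpow y = single d d (2 ^ n) := by
  ext v v'
  by_cases hv : v = v'
  · subst hv
    simp [Zpow_eq_diagonal, Matrix.sum_apply, sum_chi_dot_mul_chi_dot, single_apply, eq_comm]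
  · simp [Zpow_eq_diagonal, Matrix.sum_apply, hv, single_apply]
    grind

end ZPart

lemma eq_add_comm_iff {G : Type*} [AddCommGroup G] [Module (ZMod 2) G] {x y z : G} :
    x = y + z ↔ z = x + y := by
  rw [← sub_eq_iff_eq_add', ZModModule.sub_eq_add, eq_comm]

section Pauli
variable {m : ℕ}

def xPart (v : V m) : Fin m → ZMod 2 := fun i => (v i).1

def zPart (v : V m) : Fin m → ZMod 2 := fun i => (v i).2

def ofParts (α β : Fin m → ZMod 2) : V m := fun i => (α i, β i)

@[simp] lemma xPart_ofParts (α β : Fin m → ZMod 2) : xPart (ofParts α β) = α := rfl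

@[simp] lemma zPart_ofParts (α β : Fin m → ZMod 2) : zPart (ofParts α β) = β := rfl

lemma sum_V_eq_sum_ofParts {M : Type*} [AddCommMonoid M] (f : V m → M) :
    ∑ Q, f Q = ∑ α, ∑ β, f (ofParts α β) := by
  rw [← Fintype.sum_prod_type']
  exact (Fintype.sum_equiv (Equiv.arrowProdEquivProdArrow _ _ _) _ _ fun _ => rfl)

lemma sympl_eq_dot_add_dot (P Q : V m) :
    sympl P Q = dot (xPart P) (zPart Q) + dot (zPart P) (xPart Q) :=
  sum_add_distrib

noncomputable def phase (v : V m) : ℂ :=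
  Complex.I ^ (Finset.univ.filter (fun i => (v i).1 = 1 ∧ (v i).2 = 1)).card

lemma W_apply (v : V m) (j k : Fin m → ZMod 2) :
    W v j k = phase v * chi (dot (zPart v) k) * if j = k + xPart v then 1 else 0 := rfl

lemma W_ofParts_apply (α β j k : Fin m → ZMod 2) :
    W (ofParts α β) j k = phase (ofParts α β) * chi (dot β k) * if j = k + α then 1 else 0 := rfl

lemma phase_mul_self (v : V m) : phase v * phase v = chi (dot (xPart v) (zPart v)) := by
  have hcard : ((Finset.univ.filter (fun i => (v i).1 = 1 ∧ (v i).2 = 1)).card : ZMod 2)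
      = dot (xPart v) (zPart v) := by
    have hmul : ∀ a b : ZMod 2, a * b = if a = 1 ∧ b = 1 then 1 else 0 := by decide
    change _ = ∑ i, (v i).1 * (v i).2
    simp_rw [hmul, sum_boole]
  rw [phase, ← pow_add, ← two_mul, pow_mul, Complex.I_sq, ← hcard, chi_natCast]

lemma phase_mul_star (v : V m) : phase v * star (phase v) = 1 := by
  simp [phase, ← mul_pow]

lemma sum_chi_sympl_mul_W_mul_W (P : V m) (u u' q q' : Fin m → ZMod 2) :
    ∑ Q, chi (sympl P Q) * (W Q u u' * W Q q q') = 2 ^ m * (W P q u' * star (W P q' u)) := by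
  have hterm : ∀ α β, chi (sympl P (ofParts α β)) * (W (ofParts α β) u u' * W (ofParts α β) q q')
      = ((if u = u' + α then 1 else 0) * (if q = q' + α then 1 else 0) * chi (dot (zPart P) α)) *
          chi (dot β (xPart P + α + u' + q')) := by
    intro α β
    have hphase := phase_mul_self (ofParts α β)
    simp only [xPart_ofParts, zPart_ofParts] at hphase
    simp only [W_ofParts_apply, sympl_eq_dot_add_dot, xPart_ofParts, zPart_ofParts, dot_comm β,
      dot_add_left, chi_add]
    linear_combination (chi (dot (xPart P) β) * chi (dot (zPart P) α) * chi (dot u' β) *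
      chi (dot q' β) * (if u = u' + α then 1 else 0) * (if q = q' + α then 1 else 0)) * hphase
  -- Summing over the Z-part `β` leaves only X-parts `α` with `α = xPart P + u' + q'`, and the
  -- entry `W Q u u'` leaves only `α = u + u'`.
  rw [sum_V_eq_sum_ofParts]
  simp_rw [hterm, ← mul_sum, sum_chi_dot]
  rw [Fintype.sum_eq_single (u + u') fun α hα => by simp [eq_add_comm_iff (z := α), hα],
    if_pos (eq_add_comm_iff.mpr rfl), one_mul]
  simp only [W_apply, star_mul', star_chi, apply_ite (star : ℂ → ℂ), star_one, star_zero]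
  have hP := phase_mul_star P
  by_cases hq' : q' = u + xPart P
  · subst hq'
    have h0 : xPart P + (u + u') + u' + (u + xPart P) = 0 := by
      ext; simp only [Pi.add_apply, Pi.zero_apply]; grind
    have hq : u + xPart P + (u + u') = u' + xPart P := by
      ext; simp only [Pi.add_apply]; grind
    simp only [h0, hq, dot_add_right, chi_add, if_true, mul_one]
    linear_combination -(2 ^ m * chi (dot (zPart P) u) * chi (dot (zPart P) u') *
      (if q = u' + xPart P then 1 else 0)) * hP
  · have h0 : xPart P + (u + u') + u' + q' ≠ 0 := by
      contrapose! hq'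
      rw [eq_neg_of_add_eq_zero_right hq', ZModModule.neg_eq_self]
      ext; simp only [Pi.add_apply]; grind
    simp [h0, hq']

lemma sum_chi_sympl_trace_smul_W (P : V m)
    (A : Matrix (Fin m → ZMod 2) (Fin m → ZMod 2) ℂ) :
    ∑ Q, (chi (sympl P Q) * (W Q * A).trace) • W Q = (2 ^ m : ℂ) • (W P * A * (W P)ᴴ) := by
  ext q q'
  simp only [Matrix.sum_apply, Matrix.smul_apply, smul_eq_mul, trace, diag_apply, mul_apply,
    conjTranspose_apply, mul_sum, sum_mul]
  rw [sum_comm]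
  refine sum_congr rfl fun u _ => ?_
  rw [sum_comm]
  refine sum_congr rfl fun u' _ => ?_
  calc _ = A u' u * ∑ Q, chi (sympl P Q) * (W Q u u' * W Q q q') := by
        rw [mul_sum]; exact sum_congr rfl fun Q _ => by ring
    _ = _ := by rw [sum_chi_sympl_mul_W_mul_W]; ring

end Pauli

section Kronecker
variable {ι l m n p α : Type*} [NonUnitalNonAssocSemiring α]

lemma sum_kronecker (s : Finset ι) (A : ι → Matrix l m α) (B : Matrix n p α) :
    (∑ i ∈ s, A i) ⊗ₖ B = ∑ i ∈ s, A i ⊗ₖ B := by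
  ext ⟨_, _⟩ ⟨_, _⟩
  simp [Matrix.sum_apply, sum_mul]

lemma kronecker_sum (s : Finset ι) (A : Matrix l m α) (B : ι → Matrix n p α) :
    A ⊗ₖ (∑ i ∈ s, B i) = ∑ i ∈ s, A ⊗ₖ B i := by
  ext ⟨_, _⟩ ⟨_, _⟩
  simp [Matrix.sum_apply, mul_sum]

end Kronecker

lemma sum_chi_trace_smul_eq_conj_of_kronecker {m n : ℕ} (c d : Fin n → ZMod 2) (P : V m)
    (A : Matrix (Fin m → ZMod 2) (Fin m → ZMod 2) ℂ)
    (B : Matrix (Fin n → ZMod 2) (Fin n → ZMod 2) ℂ) :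
    ∑ x, ∑ y, ∑ Q, (chi (dot c x + dot d y + sympl P Q) *
        ((W Q ⊗ₖ Zpow x) * (A ⊗ₖ B)).trace) • (W Q ⊗ₖ Zpow y)
      = (2 ^ (2 * n + m) : ℂ) •
          ((W P ⊗ₖ single d c 1) * (A ⊗ₖ B) * (W P ⊗ₖ single d c 1)ᴴ) := by
  have hterm : ∀ x y Q, (chi (dot c x + dot d y + sympl P Q) *
        ((W Q ⊗ₖ Zpow x) * (A ⊗ₖ B)).trace) • (W Q ⊗ₖ Zpow y)
      = (chi (dot c x) * (Zpow x * B).trace) •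
          ((chi (sympl P Q) * (W Q * A).trace) • W Q) ⊗ₖ (chi (dot d y) • Zpow y) := by
    intro x y Q
    rw [← mul_kronecker_mul, trace_kronecker, chi_add, chi_add, smul_kronecker, kronecker_smul,
      smul_smul, smul_smul]
    congr 1
    ring
  calc _ = ∑ x, (chi (dot c x) * (Zpow x * B).trace) •
        ((∑ Q, (chi (sympl P Q) * (W Q * A).trace) • W Q) ⊗ₖ ∑ y, chi (dot d y) • Zpow y) := by
        simp_rw [hterm, sum_kronecker, kronecker_sum, smul_sum]
        exact sum_congr rfl fun x _ => sum_comm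
    _ = _ := by
      rw [← sum_smul, sum_chi_mul_trace_Zpow_mul, sum_chi_sympl_trace_smul_W, sum_chi_smul_Zpow,
        conjTranspose_kronecker, ← mul_kronecker_mul, ← mul_kronecker_mul, conjTranspose_single,
        single_mul_mul_single]
      ext ⟨_, _⟩ ⟨_, _⟩
      simp only [kronecker_apply, Matrix.smul_apply, single_apply, smul_eq_mul, star_one]
      split_ifs <;> ring

lemma sum_chi_trace_smul_eq_conj {m n : ℕ} (c d : Fin n → ZMod 2) (P : V m) (σ : MatP m n) :
    ∑ x, ∑ y, ∑ Q, (chi (dot c x + dot d y + sympl P Q) *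
        ((W Q ⊗ₖ Zpow x) * σ).trace) • (W Q ⊗ₖ Zpow y)
      = (2 ^ (2 * n + m) : ℂ) • ((W P ⊗ₖ single d c 1) * σ * (W P ⊗ₖ single d c 1)ᴴ) := by
  induction σ using Matrix.induction_on' with
  | h_zero => simp
  | h_add σ τ hσ hτ =>
    simp only [mul_add, add_mul, trace_add, add_smul, sum_add_distrib, smul_add, hσ, hτ]
  | h_std_basis i j t =>
    rw [← mul_one t, ← single_kronecker_single]
    exact sum_chi_trace_smul_eq_conj_of_kronecker c d P _ _

lemma sum_comm_three {α β γ δ ε ζ M : Type*} [Fintype α] [Fintype β] [Fintype γ] [Fintype δ]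
    [Fintype ε] [Fintype ζ] [AddCommMonoid M] (f : α → β → γ → δ → ε → ζ → M) :
    ∑ a, ∑ b, ∑ c, ∑ x, ∑ y, ∑ z, f a b c x y z = ∑ x, ∑ y, ∑ z, ∑ a, ∑ b, ∑ c, f a b c x y z := by
  simpa only [Fintype.sum_prod_type] using
    sum_comm (s := (univ : Finset (α × β × γ))) (t := (univ : Finset (δ × ε × ζ)))
      (f := fun t s => f t.1 t.2.1 t.2.2 s.1 s.2.1 s.2.2)

theorem stmt_2_general (n m : ℕ)
    (p : (Fin n → ZMod 2) × (Fin n → ZMod 2) × V m → ℝ)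
    (lam : (Fin n → ZMod 2) → (Fin n → ZMod 2) → V m → ℝ)
    (hlam : ∀ (x y : Fin n → ZMod 2) (Q : V m),
      lam x y Q = ∑ a : Fin n → ZMod 2, ∑ b : Fin n → ZMod 2, ∑ P : V m,
        sgn (dot a x + dot b y + sympl P Q) * p (a, b, P))
    (G : MatP m n)
    (k : Fin n → ZMod 2) (ρ : MatP m n) :
    ∑ a : Fin n → ZMod 2, ∑ b : Fin n → ZMod 2, ∑ P : V m,
      (p (a, b, P) : ℂ) •
        ((W P ⊗ₖ Matrix.single (k + b) (k + a) (1 : ℂ)) * (G * ρ * Gᴴ) *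
          (W P ⊗ₖ Matrix.single (k + b) (k + a) (1 : ℂ))ᴴ)
    = ((2 : ℂ) ^ (2 * n + m))⁻¹ •
        ∑ x : Fin n → ZMod 2, ∑ y : Fin n → ZMod 2, ∑ Q : V m,
          ((((sgn (dot k (x + y)) * lam x y Q : ℝ) : ℂ)) *
            (Gᴴ * (W Q ⊗ₖ Zpow x) * G * ρ).trace) • (W Q ⊗ₖ Zpow y) := by
  have htrace : ∀ X : MatP m n, (Gᴴ * X * G * ρ).trace = (X * (G * ρ * Gᴴ)).trace := fun X => by
    rw [Matrix.mul_assoc, Matrix.mul_assoc, trace_mul_comm, Matrix.mul_assoc, Matrix.mul_assoc]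
  have hcoeff : ∀ x y Q, ((sgn (dot k (x + y)) * lam x y Q : ℝ) : ℂ)
      = ∑ a, ∑ b, ∑ P, (p (a, b, P) : ℂ) * chi (dot (k + a) x + dot (k + b) y + sympl P Q) := by
    intro x y Q
    simp only [hlam, Complex.ofReal_mul, Complex.ofReal_sum, ofReal_sgn, mul_sum]
    refine sum_congr rfl fun a _ => sum_congr rfl fun b _ => sum_congr rfl fun P _ => ?_
    rw [← mul_assoc, ← chi_add, mul_comm, dot_add_left, dot_add_left, dot_add_right]
    congr 2
    ring
  have hconj : ∀ a b P, (W P ⊗ₖ single (k + b) (k + a) 1) * (G * ρ * Gᴴ) *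
      (W P ⊗ₖ single (k + b) (k + a) (1 : ℂ))ᴴ = ((2 : ℂ) ^ (2 * n + m))⁻¹ •
        ∑ x, ∑ y, ∑ Q, (chi (dot (k + a) x + dot (k + b) y + sympl P Q) *
          ((W Q ⊗ₖ Zpow x) * (G * ρ * Gᴴ)).trace) • (W Q ⊗ₖ Zpow y) := fun a b P => by
    rw [sum_chi_trace_smul_eq_conj, inv_smul_smul₀ (by norm_num)]
  simp_rw [htrace, hcoeff, hconj, sum_mul, sum_smul, smul_sum, smul_smul]
  rw [sum_comm_three]
  refine sum_congr rfl fun x _ => sum_congr rfl fun y _ => sum_congr rfl fun Q _ => ?_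
  refine sum_congr rfl fun a _ => sum_congr rfl fun b _ => sum_congr rfl fun P _ => ?_
  congr 1
  ring

/-- Dual-space form of a uniform stochastic instrument composed with a unitary
(Lemma 1 of the paper). -/
theorem stmt_2 (n m : ℕ)
    (p : (Fin n → ZMod 2) × (Fin n → ZMod 2) × V m → ℝ)
    (lam : (Fin n → ZMod 2) → (Fin n → ZMod 2) → V m → ℝ)
    (hlam : ∀ (x y : Fin n → ZMod 2) (Q : V m),
      lam x y Q = ∑ a : Fin n → ZMod 2, ∑ b : Fin n → ZMod 2, ∑ P : V m,
        sgn (dot a x + dot b y + sympl P Q) * p (a, b, P))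
    (G : MatP m n) (hG : G * Gᴴ = 1) (hG' : Gᴴ * G = 1)
    (k : Fin n → ZMod 2) (ρ : MatP m n) :
    ∑ a : Fin n → ZMod 2, ∑ b : Fin n → ZMod 2, ∑ P : V m,
      (p (a, b, P) : ℂ) •
        ((W P ⊗ₖ Matrix.single (k + b) (k + a) (1 : ℂ)) * (G * ρ * Gᴴ) *
          (W P ⊗ₖ Matrix.single (k + b) (k + a) (1 : ℂ))ᴴ)
    = ((2 : ℂ) ^ (2 * n + m))⁻¹ •
        ∑ x : Fin n → ZMod 2, ∑ y : Fin n → ZMod 2, ∑ Q : V m,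
          ((((sgn (dot k (x + y)) * lam x y Q : ℝ) : ℂ)) *
            (Gᴴ * (W Q ⊗ₖ Zpow x) * G * ρ).trace) • (W Q ⊗ₖ Zpow y) :=
  stmt_2_general n m p lam hlam G k ρ
end

section
/- Proposition 1 of the paper, stated as a cycle-space membership: let n, m ∈ ℕ, let g : V_{m+n} → V_{m+n} be any map (representing the conjugation action of G† on Pauli labels), let P ∈ V_m, and let a, b ∈ Z2^n with a ≠ 0 and b ≠ 0. Then in the free ℝ-module on Pauli weight patterns (Finsupp (Fin (m+n) → ZMod 2) ℝ) one has Σ_{x,y ∈ Z2^n} Σ_{Q ∈ V_m} (-1)^{a·x + b·y + ⟨P,Q⟩} · ([pt(Q⊞y)] − [pt(g(Q⊞x))]) = 0; i.e., the 1-chain Σ_{x,y,Q} (-1)^{a·x + b·y + ⟨P,Q⟩} e^Q_{x,y} of the pattern transfer graph has zero boundary. -/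
open Finset

/-- Pauli weight pattern: `1` on qubits where the Pauli label is non-identity. -/
def pt {N : ℕ} (v : V N) : Fin N → ZMod 2 :=
  fun i => if v i = (0, 0) then 0 else 1

/-- `Q⊞x`: the `(m+n)`-qubit Pauli label of `Q ⊗ Z^x`. -/
def emb {m n : ℕ} (Q : V m) (x : Fin n → ZMod 2) : V (m + n) :=
  Fin.append Q (fun i => ((0 : ZMod 2), x i))

lemma sgn_add (u v : ZMod 2) : sgn (u + v) = sgn u * sgn v := by
  have h : ∀ z : ZMod 2, z = 0 ∨ z = 1 := by decide
  have e0 : ((0 : ZMod 2)).val = 0 := rfl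
  have e1 : ((1 : ZMod 2)).val = 1 := rfl
  have e2 : (1 + 1 : ZMod 2) = 0 := by decide
  rcases h u with hu | hu <;> rcases h v with hv | hv <;>
    subst hu <;> subst hv <;> simp [sgn, e0, e1, e2]

lemma sum_sgn_dot {n : ℕ} (a : Fin n → ZMod 2) (ha : a ≠ 0) :
    ∑ x : Fin n → ZMod 2, sgn (dot a x) = 0 := by
  obtain ⟨i, hi⟩ := Function.ne_iff.mp ha
  have hai : a i = 1 := by
    have h1 : ∀ z : ZMod 2, z ≠ 0 → z = 1 := by decide
    exact h1 _ hi
  have key : ∀ x : Fin n → ZMod 2, dot a (x + Pi.single i 1) = dot a x + 1 := by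
    intro x
    simp only [dot, Pi.add_apply, mul_add, Finset.sum_add_distrib]
    congr 1
    rw [Finset.sum_eq_single i]
    · simp [hai]
    · intro j _ hj; simp [Pi.single_eq_of_ne hj]
    · simp
  have hσ : ∑ x : Fin n → ZMod 2, sgn (dot a x)
      = ∑ x : Fin n → ZMod 2, sgn (dot a (x + Pi.single i 1)) :=
    (Fintype.sum_equiv (Equiv.addRight (Pi.single i 1)) _ _ (fun x => rfl)).symm
  have hneg : ∀ z : ZMod 2, sgn (z + 1) = - sgn z := by
    intro z
    rw [sgn_add]
    have h1 : sgn 1 = -1 := by simp [sgn, show ((1 : ZMod 2)).val = 1 from rfl]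
    rw [h1]; ring
  have : ∑ x : Fin n → ZMod 2, sgn (dot a x)
      = - ∑ x : Fin n → ZMod 2, sgn (dot a x) := by
    nth_rewrite 1 [hσ]
    simp only [key, hneg, Finset.sum_neg_distrib]
  linarith

/-- Proposition 1 of the paper, as a cycle-space membership: for `a ≠ 0`, `b ≠ 0`,
the 1-chain `Σ_{x,y,Q} (-1)^{a·x + b·y + ⟨P,Q⟩} e^Q_{x,y}` has zero boundary. -/
theorem stmt_6 (n m : ℕ) (g : V (m + n) → V (m + n)) (P : V m)
    (a b : Fin n → ZMod 2) (ha : a ≠ 0) (hb : b ≠ 0) :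
    ∑ x : Fin n → ZMod 2, ∑ y : Fin n → ZMod 2, ∑ Q : V m,
      sgn (dot a x + dot b y + sympl P Q) •
        (Finsupp.single (pt (emb Q y)) (1 : ℝ) -
          Finsupp.single (pt (g (emb Q x))) (1 : ℝ)) = 0 := by
  simp only [smul_sub, Finset.sum_sub_distrib]
  have hA : (∑ x : Fin n → ZMod 2, ∑ y : Fin n → ZMod 2, ∑ Q : V m,
      sgn (dot a x + dot b y + sympl P Q) •
        Finsupp.single (pt (emb Q y)) (1 : ℝ)) = 0 := by
    have h : ∀ x : Fin n → ZMod 2,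
        (∑ y : Fin n → ZMod 2, ∑ Q : V m, sgn (dot a x + dot b y + sympl P Q) •
          Finsupp.single (pt (emb Q y)) (1 : ℝ)) =
        sgn (dot a x) • (∑ y : Fin n → ZMod 2, ∑ Q : V m,
          sgn (dot b y + sympl P Q) • Finsupp.single (pt (emb Q y)) (1 : ℝ)) := by
      intro x
      rw [Finset.smul_sum]
      refine Finset.sum_congr rfl fun y _ => ?_
      rw [Finset.smul_sum]
      refine Finset.sum_congr rfl fun Q _ => ?_
      rw [add_assoc, sgn_add, mul_smul]
    simp only [h]
    rw [← Finset.sum_smul, sum_sgn_dot a ha, zero_smul]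
  have hB : (∑ x : Fin n → ZMod 2, ∑ y : Fin n → ZMod 2, ∑ Q : V m,
      sgn (dot a x + dot b y + sympl P Q) •
        Finsupp.single (pt (g (emb Q x))) (1 : ℝ)) = 0 := by
    have h : ∀ x : Fin n → ZMod 2,
        (∑ y : Fin n → ZMod 2, ∑ Q : V m, sgn (dot a x + dot b y + sympl P Q) •
          Finsupp.single (pt (g (emb Q x))) (1 : ℝ)) = 0 := by
      intro x
      have h2 : ∀ y : Fin n → ZMod 2,
          (∑ Q : V m, sgn (dot a x + dot b y + sympl P Q) •
            Finsupp.single (pt (g (emb Q x))) (1 : ℝ)) =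
          sgn (dot b y) • (∑ Q : V m, sgn (dot a x + sympl P Q) •
            Finsupp.single (pt (g (emb Q x))) (1 : ℝ)) := by
        intro y
        rw [Finset.smul_sum]
        refine Finset.sum_congr rfl fun Q _ => ?_
        have : dot a x + dot b y + sympl P Q = dot b y + (dot a x + sympl P Q) := by ring
        rw [this, sgn_add, mul_smul]
      simp only [h2]
      rw [← Finset.sum_smul, sum_sgn_dot b hb, zero_smul]
    simp only [h, Finset.sum_const_zero]
  rw [hA, hB, sub_zero]
end

section
/- Invariance of the cycle space under the Walsh–Hadamard transform for noisy Clifford gates (Theorem 4 of the paper), stated as a cycle-space membership: let m ∈ ℕ and l ≥ 1. Let τ : V_m → V_m be a bijection preserving the symplectic inner product (⟨τ(P), τ(Q)⟩ = ⟨P,Q⟩ for all P, Q), representing conjugation by G†. Let Q : ZMod l → V_m be a cyclic sequence of labels, and for each k ∈ ZMod l let h_k : V_m → V_m be a bijection that preserves the symplectic inner product and preserves Pauli weight patterns (pt(h_k(R)) = pt(R) for all R), such that h_k(Q_k) = τ(Q_{k+1}) for every k ∈ ZMod l. Then in the free ℝ-module on Pauli weight patterns one has Σ_{k ∈ ZMod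 l} Σ_{R ∈ V_m} (-1)^{⟨Q_k, R⟩} · ([pt(R)] − [pt(τ(R))]) = 0; i.e., the Walsh–Hadamard transform Σ_{k} Σ_{R} (-1)^{⟨Q_k, R⟩} e^R of the cycle formed by the edges e^{Q_1}, …, e^{Q_l} again has zero boundary. -/
open Finset

/-!
The Walsh–Hadamard transform `W(P) := Σ_R (-1)^{⟨P,R⟩} [pt R]` of a single label is
unchanged when the summation variable is moved by a symplectic bijection `g`, in the form
`Σ_R (-1)^{⟨g P,R⟩} F(R) = Σ_R (-1)^{⟨P,R⟩} F(g R)`. Hence the τ-half of the transformed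
boundary at `Q_k` is `W(τ Q_k)`, while the pattern-preserving layer `h_k` gives
`W(Q_k) = W(h_k Q_k) = W(τ Q_{k+1})`. The boundary is therefore the telescoping sum
`Σ_k (W(τ Q_{k+1}) - W(τ Q_k))` over the cyclic index set, which vanishes.
-/

theorem Fintype.sum_sub_comp_add_right {G M : Type*} [AddGroup G] [Fintype G]
    [AddCommGroup M] (f : G → M) (a : G) : ∑ k, (f (k + a) - f k) = 0 := by
  rw [Finset.sum_sub_distrib, sub_eq_zero]
  exact Fintype.sum_equiv (Equiv.addRight a) _ _ fun _ => rfl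

section Symplectic

variable {m : ℕ} {M : Type*} [AddCommGroup M] [Module ℝ M]

theorem sum_sgn_sympl_smul_of_symplectic {g : V m → V m} (hg : Function.Bijective g)
    (hg_sympl : ∀ P R, sympl (g P) (g R) = sympl P R) (P : V m) (F : V m → M) :
    ∑ R, sgn (sympl (g P) R) • F R = ∑ R, sgn (sympl P R) • F (g R) :=
  (Fintype.sum_bijective g hg _ _ fun R => by rw [hg_sympl]).symm

noncomputable def patternWHT (P : V m) : (Fin m → ZMod 2) →₀ ℝ :=
  ∑ R, sgn (sympl P R) • Finsupp.single (pt R) 1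

theorem patternWHT_apply_of_symplectic {g : V m → V m} (hg : Function.Bijective g)
    (hg_sympl : ∀ P R, sympl (g P) (g R) = sympl P R) (P : V m) :
    patternWHT (g P) = ∑ R, sgn (sympl P R) • Finsupp.single (pt (g R)) 1 :=
  sum_sgn_sympl_smul_of_symplectic hg hg_sympl P _

theorem patternWHT_apply_of_symplectic_of_pt {g : V m → V m} (hg : Function.Bijective g)
    (hg_sympl : ∀ P R, sympl (g P) (g R) = sympl P R) (hg_pt : ∀ R, pt (g R) = pt R)
    (P : V m) : patternWHT (g P) = patternWHT P := by
  rw [patternWHT_apply_of_symplectic hg hg_sympl]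
  simp only [hg_pt, patternWHT]

end Symplectic

theorem stmt_9_general (m l : ℕ) [NeZero l]
    (τ : V m → V m) (hτbij : Function.Bijective τ)
    (hτsymp : ∀ P R : V m, sympl (τ P) (τ R) = sympl P R)
    (Q : ZMod l → V m) (h : ZMod l → V m → V m)
    (hbij : ∀ k, Function.Bijective (h k))
    (hsymp : ∀ (k : ZMod l) (P R : V m), sympl (h k P) (h k R) = sympl P R)
    (hpt : ∀ (k : ZMod l) (R : V m), pt (h k R) = pt R)
    (hQ : ∀ k : ZMod l, h k (Q k) = τ (Q (k + 1))) :
    ∑ k : ZMod l, ∑ R : V m,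
      sgn (sympl (Q k) R) •
        (Finsupp.single (pt R) (1 : ℝ) - Finsupp.single (pt (τ R)) (1 : ℝ)) = 0 := by
  have hcycle : ∀ k, patternWHT (Q k) = patternWHT (τ (Q (k + 1))) := fun k => by
    rw [← hQ k, patternWHT_apply_of_symplectic_of_pt (hbij k) (hsymp k) (hpt k)]
  calc ∑ k : ZMod l, ∑ R : V m,
        sgn (sympl (Q k) R) • (Finsupp.single (pt R) 1 - Finsupp.single (pt (τ R)) 1)
      = ∑ k, (patternWHT (Q k) - patternWHT (τ (Q k))) := by
        simp only [patternWHT_apply_of_symplectic hτbij hτsymp, smul_sub, sum_sub_distrib]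
        rfl
    _ = ∑ k, (patternWHT (τ (Q (k + 1))) - patternWHT (τ (Q k))) := by simp only [hcycle]
    _ = 0 := Fintype.sum_sub_comp_add_right (fun k => patternWHT (τ (Q k))) 1

/-- Invariance of the cycle space under the Walsh–Hadamard transform for noisy
Clifford gates (Theorem 4 of the paper): for a cycle `e^{Q_1}, …, e^{Q_l}` of the
pattern transfer graph (witnessed by the symplectic- and pattern-preserving
single-qubit-Clifford layers `h_k` with `h_k(Q_k) = τ(Q_{k+1})`), its
Walsh–Hadamard transform `Σ_k Σ_R (-1)^{⟨Q_k,R⟩} e^R` again has zero boundary. -/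
theorem stmt_9 (m l : ℕ) [NeZero l] (hl : 1 ≤ l)
    (τ : V m → V m) (hτbij : Function.Bijective τ)
    (hτsymp : ∀ P R : V m, sympl (τ P) (τ R) = sympl P R)
    (Q : ZMod l → V m) (h : ZMod l → V m → V m)
    (hbij : ∀ k, Function.Bijective (h k))
    (hsymp : ∀ (k : ZMod l) (P R : V m), sympl (h k P) (h k R) = sympl P R)
    (hpt : ∀ (k : ZMod l) (R : V m), pt (h k R) = pt R)
    (hQ : ∀ k : ZMod l, h k (Q k) = τ (Q (k + 1))) :
    ∑ k : ZMod l, ∑ R : V m,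
      sgn (sympl (Q k) R) •
        (Finsupp.single (pt R) (1 : ℝ) - Finsupp.single (pt (τ R)) (1 : ℝ)) = 0 :=
  stmt_9_general m l τ hτbij hτsymp Q h hbij hsymp hpt hQ
end
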